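/- Let G be the presented group on two generators μ and λ subject to the single relation μλμ = λ, and let ι : ℤ × ℤ → G be the homomorphism ι(a, b) = μᵃ λ^{2b}. Then for every primitive element (a, b) of ℤ × ℤ (i.e., gcd(a, b) = 1), the image ι(a, b) lies in the center of G if and only if (a, b) = (0, 1) or (a, b) = (0, -1). -/
import Mathlib


/-- The two generators `μ` and `λ` of the Klein bottle group. -/
inductive KleinGen : Type
  | mu : KleinGen
  | lam : KleinGen

/-- The single relator `μλμλ⁻¹` of the Klein bottle group. -/
def kleinRels : Set (FreeGroup KleinGen) :=
  {FreeGroup.of KleinGen.mu * FreeGroup.of KleinGen.lam * FreeGroup.of KleinGen.mu *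
    (FreeGroup.of KleinGen.lam)⁻¹}

/-- The presented group `G = ⟨μ, λ | μλμ = λ⟩`. -/
abbrev KleinGroup : Type := PresentedGroup kleinRels

/-- The image of the generator `μ` in `G`. -/
def muG : KleinGroup := PresentedGroup.of KleinGen.mu

/-- The image of the generator `λ` in `G`. -/
def lamG : KleinGroup := PresentedGroup.of KleinGen.lam

/-- The relation of the Klein bottle group. -/
lemma klein_rel : muG * lamG * muG * lamG⁻¹ = 1 := by
  have h1 : (QuotientGroup.mk (FreeGroup.of KleinGen.mu * FreeGroup.of KleinGen.lam *
      FreeGroup.of KleinGen.mu * (FreeGroup.of KleinGen.lam)⁻¹) :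
        FreeGroup KleinGen ⧸ Subgroup.normalClosure kleinRels) = 1 :=
    (QuotientGroup.eq_one_iff _).mpr (Subgroup.subset_normalClosure rfl)
  exact h1

lemma klein_rel2 : muG * lamG * muG = lamG := by
  have h := klein_rel
  rwa [mul_inv_eq_one] at h

lemma klein_rel' : muG⁻¹ * lamG = lamG * muG := by
  calc muG⁻¹ * lamG = muG⁻¹ * (muG * lamG * muG) := by rw [klein_rel2]
  _ = lamG * muG := by group

lemma lamG_sq_central : lamG ^ 2 ∈ Subgroup.center KleinGroup := by
  rw [Subgroup.mem_center_iff]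
  intro g
  have : g ∈ Subgroup.centralizer {lamG ^ 2} := by
    refine PresentedGroup.generated_by _ _ (fun j => ?_) g
    rw [Subgroup.mem_centralizer_iff]
    rintro h rfl1
    simp only [Set.mem_singleton_iff] at rfl1
    subst rfl1
    cases j with
    | lam =>
      show lamG ^ 2 * lamG = lamG * lamG ^ 2
      group
    | mu =>
      show lamG ^ 2 * muG = muG * lamG ^ 2
      have h1 : muG * lamG ^ 2 = lamG * (muG⁻¹ * lamG) := by
        have hml : muG * lamG = lamG * muG⁻¹ := by
          calc muG * lamG = (muG * lamG * muG) * muG⁻¹ := by group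
          _ = lamG * muG⁻¹ := by rw [klein_rel2]
        rw [pow_two, ← mul_assoc, hml, mul_assoc]
      rw [h1, klein_rel', pow_two, mul_assoc]
  exact (Subgroup.mem_centralizer_iff.mp this (lamG ^ 2) rfl).symm

/-- The negation automorphism of `Multiplicative ℤ`. -/
def negAut : MulAut (Multiplicative ℤ) := MulEquiv.inv (Multiplicative ℤ)

/-- The action of `Multiplicative ℤ` on `Multiplicative ℤ` with generator acting by inversion. -/
def kleinAct : Multiplicative ℤ →* MulAut (Multiplicative ℤ) :=
  zpowersHom (MulAut (Multiplicative ℤ)) negAut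

/-- Concrete model: `ℤ ⋊ ℤ`. -/
abbrev KleinModel := SemidirectProduct (Multiplicative ℤ) (Multiplicative ℤ) kleinAct

lemma kleinAct_one (x : Multiplicative ℤ) : kleinAct (Multiplicative.ofAdd 1) x = x⁻¹ := by
  simp [kleinAct, negAut]

def kleinGenMap : KleinGen → KleinModel
  | KleinGen.mu => SemidirectProduct.inl (Multiplicative.ofAdd 1)
  | KleinGen.lam => SemidirectProduct.inr (Multiplicative.ofAdd 1)

lemma kleinGenMap_rels : ∀ r ∈ kleinRels, FreeGroup.lift kleinGenMap r = 1 := by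
  intro r hr
  rw [kleinRels, Set.mem_singleton_iff] at hr
  subst hr
  simp only [map_mul, map_inv, FreeGroup.lift_apply_of, kleinGenMap]
  rw [mul_assoc, mul_assoc, ← mul_assoc (SemidirectProduct.inr _), ← map_inv,
    ← SemidirectProduct.inl_aut, ← map_mul, kleinAct_one, mul_inv_cancel, map_one]

/-- The homomorphism to the concrete model. -/
def toModel : KleinGroup →* KleinModel := PresentedGroup.toGroup kleinGenMap_rels

lemma toModel_mu : toModel muG = SemidirectProduct.inl (Multiplicative.ofAdd 1) :=
  PresentedGroup.toGroup.of kleinGenMap_rels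

lemma toModel_lam : toModel lamG = SemidirectProduct.inr (Multiplicative.ofAdd 1) :=
  PresentedGroup.toGroup.of kleinGenMap_rels

lemma toModel_mu_pow (a : ℤ) :
    toModel (muG ^ a) = SemidirectProduct.inl (Multiplicative.ofAdd a) := by
  rw [map_zpow, toModel_mu, ← map_zpow, ← ofAdd_zsmul, smul_eq_mul, mul_one]

lemma toModel_lam_pow (a : ℤ) :
    toModel (lamG ^ a) = SemidirectProduct.inr (Multiplicative.ofAdd a) := by
  rw [map_zpow, toModel_lam, ← map_zpow, ← ofAdd_zsmul, smul_eq_mul, mul_one]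

/-- For a primitive pair `(a,b) ∈ ℤ × ℤ` (i.e. `gcd(a,b) = 1`), the element
`ι(a,b) = μᵃ λ^{2b}` of `G = ⟨μ, λ | μλμ = λ⟩` is central if and only if
`(a,b) = (0,1)` or `(a,b) = (0,-1)`. -/
theorem central_primitive_elements (a b : ℤ) (hprim : Int.gcd a b = 1) :
    muG ^ a * lamG ^ (2 * b) ∈ Subgroup.center KleinGroup ↔
      (a, b) = ((0 : ℤ), (1 : ℤ)) ∨ (a, b) = ((0 : ℤ), (-1 : ℤ)) := by
  constructor
  · intro hc
    have hcomm : lamG * (muG ^ a * lamG ^ (2 * b)) = (muG ^ a * lamG ^ (2 * b)) * lamG := by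
      exact Subgroup.mem_center_iff.mp hc lamG
    have hm := congrArg toModel hcomm
    simp only [map_mul, toModel_mu_pow, toModel_lam_pow, toModel_lam] at hm
    have hleft := congrArg SemidirectProduct.left hm
    simp only [SemidirectProduct.mul_left, SemidirectProduct.left_inl,
      SemidirectProduct.left_inr, SemidirectProduct.right_inr, SemidirectProduct.right_inl,
      map_one, mul_one, one_mul, kleinAct_one] at hleft
    have ha : a = 0 := by
      rw [← ofAdd_neg] at hleft
      have h2 : -a = a := Multiplicative.ofAdd.injective hleft
      omega
    subst ha
    have hb : b = 1 ∨ b = -1 := by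
      simp [Int.gcd] at hprim
      omega
    rcases hb with rfl | rfl
    · left; rfl
    · right; rfl
  · rintro (h | h) <;> rw [Prod.mk.injEq] at h <;> obtain ⟨rfl, rfl⟩ := h <;>
      simp only [zpow_zero, one_mul]
    · simpa using (Subgroup.center KleinGroup).zpow_mem lamG_sq_central 1
    · simpa [show (2 : ℤ) * (-1) = -2 by norm_num] using
        (Subgroup.center KleinGroup).zpow_mem lamG_sq_central (-1)
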